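/- Let n ∈ ℕ and j ∈ {0,…,n} with n + j even. Then the square of the normalized associated Legendre function at zero satisfies (2n+1)/(2π² sqrt((n+1)² - j²)) ≤ |P̃_n^j(0)|² ≤ (2n+1)/(4π sqrt((n+1)² - j²)). -/

import Mathlib

/-! Write `n - j = 2p` and `n + j = 2q`, and let `r p = (2p-1)‼ / (2p)‼`. Then `|P̃_n^j(0)|²` is
`(2n+1)/(4π) · r p · r q`, and `(n+1)² - j² = (2p+1)(2q+1)`. The partial Wallis product satisfies
`W p · (2p+1) · (r p)² = 1`; it increases from `W 0 = 1` and is bounded by `π/2`, so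
`2 / (π (2p+1)) ≤ (r p)² ≤ 1 / (2p+1)`, and multiplying the bounds for `p` and `q` gives the claim. -/

open Real

/-- The square `|P̃_n^j(0)|²` of the normalized associated Legendre function at zero,
for `n + j` even. -/
noncomputable def ptildeSq (n j : ℕ) : ℝ :=
  (2 * n + 1) / (4 * Real.pi) *
    ((Nat.doubleFactorial (n - j - 1) * Nat.doubleFactorial (n + j - 1) : ℝ) /
      (Nat.doubleFactorial (n - j) * Nat.doubleFactorial (n + j) : ℝ))

open Real.Wallis
open scoped Nat

noncomputable def doubleFactorialRatio (p : ℕ) : ℝ := ((2 * p - 1)‼ : ℝ) / ((2 * p)‼ : ℝ)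

lemma doubleFactorialRatio_pos (p : ℕ) : 0 < doubleFactorialRatio p := by
  unfold doubleFactorialRatio
  exact div_pos (mod_cast Nat.doubleFactorial_pos _) (mod_cast Nat.doubleFactorial_pos _)

lemma doubleFactorialRatio_succ (p : ℕ) :
    doubleFactorialRatio (p + 1) = doubleFactorialRatio p * ((2 * p + 1) / (2 * p + 2)) := by
  have hodd : (2 * (p + 1) - 1)‼ = (2 * p + 1) * (2 * p - 1)‼ := Nat.doubleFactorial_add_one (2 * p)
  have heven : (2 * (p + 1))‼ = (2 * p + 2) * (2 * p)‼ := Nat.doubleFactorial_add_two (2 * p)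
  have hpos : (0 : ℝ) < ((2 * p)‼ : ℝ) := mod_cast Nat.doubleFactorial_pos _
  unfold doubleFactorialRatio
  rw [hodd, heven]
  push_cast
  field_simp

lemma Real.Wallis.W_mul_doubleFactorialRatio_sq (p : ℕ) :
    W p * ((2 * p + 1) * doubleFactorialRatio p ^ 2) = 1 := by
  induction p with
  | zero => simp [W, doubleFactorialRatio]
  | succ p ih =>
    calc W (p + 1) * ((2 * ↑(p + 1) + 1) * doubleFactorialRatio (p + 1) ^ 2)
        = W p * ((2 * p + 1) * doubleFactorialRatio p ^ 2) := by
          rw [W_succ, doubleFactorialRatio_succ]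
          push_cast
          field_simp
          ring
      _ = 1 := ih

lemma Real.Wallis.one_le_W (k : ℕ) : 1 ≤ W k := by
  induction k with
  | zero => simp [W]
  | succ k ih =>
    have hfactor : 1 ≤ (2 * k + 2) / (2 * k + 1) * ((2 * k + 2) / (2 * k + 3) : ℝ) := by
      rw [div_mul_div_comm, one_le_div (by positivity)]
      nlinarith
    rw [W_succ]
    exact one_le_mul_of_one_le_of_one_le ih hfactor

lemma doubleFactorialRatio_sq_le (p : ℕ) : doubleFactorialRatio p ^ 2 ≤ 1 / (2 * p + 1) := by
  rw [le_div_iff₀ (by positivity)]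
  calc doubleFactorialRatio p ^ 2 * (2 * p + 1)
      ≤ W p * ((2 * p + 1) * doubleFactorialRatio p ^ 2) := by
        rw [mul_comm]
        exact le_mul_of_one_le_left (by positivity) (one_le_W p)
    _ = 1 := W_mul_doubleFactorialRatio_sq p

lemma two_div_pi_le_doubleFactorialRatio_sq (p : ℕ) :
    2 / (π * (2 * p + 1)) ≤ doubleFactorialRatio p ^ 2 := by
  have hW := W_mul_doubleFactorialRatio_sq p
  rw [div_le_iff₀ (by positivity)]
  calc (2 : ℝ) = 2 * (W p * ((2 * p + 1) * doubleFactorialRatio p ^ 2)) := by rw [hW, mul_one]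
    _ ≤ 2 * (π / 2 * ((2 * p + 1) * doubleFactorialRatio p ^ 2)) := by
        gcongr
        exact W_le p
    _ = doubleFactorialRatio p ^ 2 * (π * (2 * p + 1)) := by ring

lemma two_div_pi_sqrt_le_doubleFactorialRatio_mul (p q : ℕ) :
    2 / (π * √((2 * p + 1) * (2 * q + 1))) ≤ doubleFactorialRatio p * doubleFactorialRatio q := by
  have hr := (doubleFactorialRatio_pos p).le
  have hr' := (doubleFactorialRatio_pos q).le
  rw [← pow_le_pow_iff_left₀ (by positivity) (by positivity) two_ne_zero]
  calc (2 / (π * √((2 * p + 1) * (2 * q + 1)))) ^ 2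
      = 2 / (π * (2 * p + 1)) * (2 / (π * (2 * q + 1))) := by
        rw [div_pow, mul_pow, sq_sqrt (by positivity)]
        field_simp
    _ ≤ doubleFactorialRatio p ^ 2 * doubleFactorialRatio q ^ 2 :=
        mul_le_mul (two_div_pi_le_doubleFactorialRatio_sq p)
          (two_div_pi_le_doubleFactorialRatio_sq q) (by positivity) (by positivity)
    _ = (doubleFactorialRatio p * doubleFactorialRatio q) ^ 2 := (mul_pow _ _ _).symm

lemma doubleFactorialRatio_mul_le_one_div_sqrt (p q : ℕ) :
    doubleFactorialRatio p * doubleFactorialRatio q ≤ 1 / √((2 * p + 1) * (2 * q + 1)) := by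
  have hr := (doubleFactorialRatio_pos p).le
  have hr' := (doubleFactorialRatio_pos q).le
  rw [← pow_le_pow_iff_left₀ (by positivity) (by positivity) two_ne_zero]
  calc (doubleFactorialRatio p * doubleFactorialRatio q) ^ 2
      = doubleFactorialRatio p ^ 2 * doubleFactorialRatio q ^ 2 := mul_pow _ _ _
    _ ≤ 1 / (2 * p + 1) * (1 / (2 * q + 1)) :=
        mul_le_mul (doubleFactorialRatio_sq_le p) (doubleFactorialRatio_sq_le q)
          (by positivity) (by positivity)
    _ = (1 / √((2 * p + 1) * (2 * q + 1))) ^ 2 := by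
        rw [div_pow, sq_sqrt (by positivity)]
        field_simp

lemma ptildeSq_eq_mul_doubleFactorialRatio {n j p q : ℕ} (hp : n - j = 2 * p)
    (hq : n + j = 2 * q) :
    ptildeSq n j = (2 * n + 1) / (4 * π) * (doubleFactorialRatio p * doubleFactorialRatio q) := by
  unfold ptildeSq doubleFactorialRatio
  rw [hp, hq, mul_div_mul_comm]

theorem ptildeSq_bounds (n j : ℕ) (hj : j ≤ n) (hpar : Even (n + j)) :
    (2 * n + 1) / (2 * Real.pi ^ 2 * Real.sqrt (((n : ℝ) + 1) ^ 2 - (j : ℝ) ^ 2)) ≤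
      ptildeSq n j ∧
    ptildeSq n j ≤
      (2 * n + 1) / (4 * Real.pi * Real.sqrt (((n : ℝ) + 1) ^ 2 - (j : ℝ) ^ 2)) := by
  obtain ⟨m, hm⟩ := hpar
  obtain ⟨p, q, hp, hq⟩ : ∃ p q : ℕ, n - j = 2 * p ∧ n + j = 2 * q := ⟨m - j, m, by omega, by omega⟩
  have hsq : ((n : ℝ) + 1) ^ 2 - (j : ℝ) ^ 2 = (2 * p + 1) * (2 * q + 1) := by
    have hn : (n : ℝ) = p + q := by exact_mod_cast (by omega : n = p + q)
    have hj' : (j : ℝ) = q - p := by rw [eq_sub_iff_add_eq]; exact_mod_cast (by omega : j + p = q)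
    rw [hn, hj']
    ring
  have hc : 0 ≤ (2 * (n : ℝ) + 1) / (4 * π) := by positivity
  rw [hsq, ptildeSq_eq_mul_doubleFactorialRatio hp hq]
  constructor
  · calc (2 * (n : ℝ) + 1) / (2 * π ^ 2 * √((2 * p + 1) * (2 * q + 1)))
        = (2 * n + 1) / (4 * π) * (2 / (π * √((2 * p + 1) * (2 * q + 1)))) := by
          field_simp
          ring
      _ ≤ _ := mul_le_mul_of_nonneg_left (two_div_pi_sqrt_le_doubleFactorialRatio_mul p q) hc
  · calc (2 * (n : ℝ) + 1) / (4 * π) * (doubleFactorialRatio p * doubleFactorialRatio q)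
        ≤ (2 * n + 1) / (4 * π) * (1 / √((2 * p + 1) * (2 * q + 1))) :=
          mul_le_mul_of_nonneg_left (doubleFactorialRatio_mul_le_one_div_sqrt p q) hc
      _ = _ := by rw [mul_one_div, div_div]
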